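/- Under the curvature symmetry hypotheses on A and B, one has ∫_{ℝⁿ₊} E(x) (x·∇U(x)) dx = 0; combined with ∫_{ℝⁿ₊} E U dx = 0 this yields ∫_{ℝⁿ₊} E(x) 𝔧ₙ(x) dx = 0 for 𝔧ₙ := ((2−n)/2) U − x·∇U. -/

import Mathlib

noncomputable section

open Real MeasureTheory

/-- Points of `ℝⁿ` written as `(x̃, xₙ)` with `x̃ ∈ ℝ^{n-1}`. -/
abbrev Pt (n : ℕ) : Type := (Fin (n - 1) → ℝ) × ℝ

/-- Squared Euclidean norm of the tangential part `x̃`. -/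
def nsqT {m : ℕ} (y : Fin m → ℝ) : ℝ := ∑ i, (y i) ^ 2

/-- Tangential partial derivative `∂ᵢ`, `i = 1, …, n-1`. -/
def pdT {n : ℕ} (i : Fin (n - 1)) (f : Pt n → ℝ) (x : Pt n) : ℝ :=
  fderiv ℝ f x (Pi.single i 1, 0)

/-- Normal partial derivative `∂ₙ`. -/
def pdN {n : ℕ} (f : Pt n → ℝ) (x : Pt n) : ℝ :=
  fderiv ℝ f x (0, 1)

/-- Euclidean Laplacian `Δ = Σᵢ ∂ᵢᵢ + ∂ₙₙ`. -/
def lap {n : ℕ} (f : Pt n → ℝ) (x : Pt n) : ℝ :=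
  (∑ i, pdT i (pdT i f) x) + pdN (pdN f) x

/-- The standard bubble
`U(x) = αₙ |K|^{-(n-2)/4} (|x̃|² + (xₙ + 𝔇)² - 1)^{-(n-2)/2}`. -/
def bubble (n : ℕ) (K D : ℝ) (x : Pt n) : ℝ :=
  (4 * (n : ℝ) * ((n : ℝ) - 1)) ^ (((n : ℝ) - 2) / 4) * |K| ^ (-(((n : ℝ) - 2) / 4)) *
    (nsqT x.1 + (x.2 + D) ^ 2 - 1) ^ (-(((n : ℝ) - 2) / 2))

/-!
Write `Q = |x̃|² + (xₙ + 𝔇)² - 1`, so that `U = C Q^r` with `r = -(n-2)/2`. The Hessian of `U` is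
`2 C r Q^{r-1} δᵢⱼ + 4 C r (r-1) Q^{r-2} xᵢ xⱼ`. Contracted with the coefficients of `E`, the
`δᵢⱼ` part dies by the trace conditions on `A` and `B`, and the `xᵢ xⱼ` part of the `A`-term dies
because `A` is antisymmetric in its first two indices. Hence `E = κ Q^{r-2} xₙ² Σ Bᵢⱼ xᵢ xⱼ` for a
constant `κ`. Both `U` and `x·∇U = 2 C r Q^{r-1} (|x̃|² + xₙ (xₙ + 𝔇))` depend only on
`(|x̃|², xₙ)`, so integrating `E U` or `E (x·∇U)` over the half-space reduces to integrals of
`xᵢ xⱼ w(|x̃|², xₙ)`. Reflecting one coordinate kills those with `i ≠ j`, swapping two coordinates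
shows the diagonal ones are all equal, and `Σ Bᵢᵢ = 0` finishes. The integrands are
`O(Q^{2r}) = O(|x|^{-2(n-2)})`, integrable for `n ≥ 5`.
-/

section Curvature

variable {m : ℕ} (A : Fin m → Fin m → Fin m → Fin m → ℝ) (y : Fin m → ℝ)

theorem sum_curvature_trace_eq_zero (hRic : ∀ k l, ∑ i, A i k i l = 0) :
    ∑ i, ∑ k, ∑ l, A i k i l * y k * y l = 0 := by
  rw [Finset.sum_comm]
  refine Finset.sum_eq_zero fun k _ => ?_
  rw [Finset.sum_comm]
  refine Finset.sum_eq_zero fun l _ => ?_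
  rw [← Finset.sum_mul, ← Finset.sum_mul, hRic, zero_mul, zero_mul]

theorem sum_curvature_quartic_eq_zero (hA : ∀ i k j l, A i k j l = -A k i j l) :
    ∑ i, ∑ j, (∑ k, ∑ l, A i k j l * y k * y l) * (y i * y j) = 0 := by
  set f : Fin m → Fin m → ℝ := fun i k => ∑ j, ∑ l, A i k j l * y i * y k * y j * y l
  have hf : ∀ i k, f i k = -f k i := fun i k => by
    simp only [f, ← Finset.sum_neg_distrib]
    exact Finset.sum_congr rfl fun j _ => Finset.sum_congr rfl fun l _ => by rw [hA i k j l]; ring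
  have hS : ∑ i, ∑ j, (∑ k, ∑ l, A i k j l * y k * y l) * (y i * y j) = ∑ i, ∑ k, f i k := by
    refine Finset.sum_congr rfl fun i _ => ?_
    simp only [f, Finset.sum_mul]
    rw [Finset.sum_comm]
    exact Finset.sum_congr rfl fun k _ => Finset.sum_congr rfl fun j _ =>
      Finset.sum_congr rfl fun l _ => by ring
  have hanti : ∑ i, ∑ k, f i k = -∑ i, ∑ k, f i k := calc
    ∑ i, ∑ k, f i k = ∑ k, ∑ i, f i k := Finset.sum_comm
    _ = ∑ k, ∑ i, -f k i := Finset.sum_congr rfl fun k _ => Finset.sum_congr rfl fun i _ => hf i k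
    _ = -∑ k, ∑ i, f k i := by simp only [Finset.sum_neg_distrib]
  rw [hS]
  linarith

theorem sum_curvatureCoeff_mul_hessian (hA : ∀ i k j l, A i k j l = -A k i j l)
    (hRic : ∀ k l, ∑ i, A i k i l = 0) (B : Fin m → Fin m → ℝ) (hB : ∑ i, B i i = 0)
    (t a b : ℝ) :
    ∑ i, ∑ j, ((1 / 3) * (∑ k, ∑ l, A i k j l * y k * y l) + B i j * t ^ 2) *
        ((if i = j then a else 0) + b * y i * y j) =
      b * t ^ 2 * ∑ i, ∑ j, B i j * y i * y j := by
  have hdiag : ∑ i, ∑ j, ((1 / 3) * (∑ k, ∑ l, A i k j l * y k * y l) + B i j * t ^ 2) *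
      (if i = j then a else 0) = 0 := by
    simp only [mul_ite, mul_zero, Finset.sum_ite_eq, Finset.mem_univ, if_true]
    rw [← Finset.sum_mul, Finset.sum_add_distrib, ← Finset.mul_sum, ← Finset.sum_mul,
      sum_curvature_trace_eq_zero A y hRic, hB]
    ring
  have hquad : ∑ i, ∑ j, ((1 / 3) * (∑ k, ∑ l, A i k j l * y k * y l) + B i j * t ^ 2) *
      (b * y i * y j) = (1 / 3 * b) * ∑ i, ∑ j, (∑ k, ∑ l, A i k j l * y k * y l) * (y i * y j) +
        b * t ^ 2 * ∑ i, ∑ j, B i j * y i * y j := by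
    rw [Finset.mul_sum, Finset.mul_sum, ← Finset.sum_add_distrib]
    refine Finset.sum_congr rfl fun i _ => ?_
    rw [Finset.mul_sum, Finset.mul_sum, ← Finset.sum_add_distrib]
    exact Finset.sum_congr rfl fun j _ => by ring
  simp only [mul_add, Finset.sum_add_distrib, hdiag, hquad, sum_curvature_quartic_eq_zero A y hA]
  ring

end Curvature

section Symmetry

variable {α E : Type*} [MeasureSpace α] [SigmaFinite (volume : Measure α)]
  [NormedAddCommGroup E] [NormedSpace ℝ E]

theorem setIntegral_halfSpace_comp_prodMap {φ : α → α} (hφ : MeasurePreserving φ)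
    (hφe : MeasurableEmbedding φ) (F : α × ℝ → E) :
    ∫ x in {x : α × ℝ | 0 < x.2}, F (φ x.1, x.2) = ∫ x in {x : α × ℝ | 0 < x.2}, F x := by
  have hmp : MeasurePreserving (Prod.map φ id) (volume : Measure (α × ℝ)) volume := by
    rw [Measure.volume_eq_prod]
    exact hφ.prod (MeasurePreserving.id _)
  exact hmp.setIntegral_preimage_emb (hφe.prodMap MeasurableEmbedding.id) F {x | 0 < x.2}

variable {m : ℕ}

def coordReflection (i : Fin m) : (Fin m → ℝ) ≃ᵐ (Fin m → ℝ) :=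
  MeasurableEquiv.piCongrRight fun k => if k = i then MeasurableEquiv.neg ℝ else .refl ℝ

theorem coordReflection_apply (i : Fin m) (y : Fin m → ℝ) (k : Fin m) :
    coordReflection i y k = if k = i then -y k else y k := by
  change (if k = i then MeasurableEquiv.neg ℝ else .refl ℝ) (y k) = _
  split_ifs <;> rfl

theorem measurePreserving_coordReflection (i : Fin m) :
    MeasurePreserving (coordReflection i) := by
  refine volume_preserving_pi (f := fun k => ⇑(if k = i then MeasurableEquiv.neg ℝ else .refl ℝ))
    fun k => ?_
  split_ifs
  exacts [Measure.measurePreserving_neg _, MeasurePreserving.id _]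

theorem nsqT_coordReflection (i : Fin m) (y : Fin m → ℝ) :
    nsqT (coordReflection i y) = nsqT y := by
  unfold nsqT
  refine Finset.sum_congr rfl fun k _ => ?_
  rw [coordReflection_apply]
  split_ifs <;> ring

theorem nsqT_comp_perm (σ : Equiv.Perm (Fin m)) (y : Fin m → ℝ) : nsqT (y ∘ σ) = nsqT y :=
  Equiv.sum_comp σ fun k => y k ^ 2

theorem integral_halfSpace_coord_mul_coord_mul_radial_of_ne {i j : Fin m} (hij : i ≠ j)
    (w : ℝ → ℝ → ℝ) :
    ∫ x in {x : (Fin m → ℝ) × ℝ | 0 < x.2}, x.1 i * x.1 j * w (nsqT x.1) x.2 = 0 := by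
  -- reflecting the `i`-th coordinate flips the sign of the integrand
  have h := setIntegral_halfSpace_comp_prodMap (measurePreserving_coordReflection i)
    (coordReflection i).measurableEmbedding fun x => x.1 i * x.1 j * w (nsqT x.1) x.2
  simp only [nsqT_coordReflection, coordReflection_apply, ↓reduceIte, if_neg hij.symm,
    neg_mul, integral_neg] at h
  linarith

theorem integral_halfSpace_coord_mul_self_mul_radial (i j : Fin m) (w : ℝ → ℝ → ℝ) :
    ∫ x in {x : (Fin m → ℝ) × ℝ | 0 < x.2}, x.1 i * x.1 i * w (nsqT x.1) x.2 =
      ∫ x in {x : (Fin m → ℝ) × ℝ | 0 < x.2}, x.1 j * x.1 j * w (nsqT x.1) x.2 := by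
  have h := setIntegral_halfSpace_comp_prodMap
    (volume_measurePreserving_piCongrLeft (fun _ => ℝ) (Equiv.swap i j))
    (MeasurableEquiv.measurableEmbedding _) fun x => x.1 i * x.1 i * w (nsqT x.1) x.2
  have hswap : ∀ y : Fin m → ℝ, MeasurableEquiv.piCongrLeft (fun _ => ℝ) (Equiv.swap i j) y =
      y ∘ Equiv.swap i j := fun y => by
    ext k
    simp [MeasurableEquiv.coe_piCongrLeft, Equiv.piCongrLeft_apply_eq_cast]
  simp only [hswap, nsqT_comp_perm, Function.comp_apply, Equiv.swap_apply_left] at h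
  exact h.symm

theorem quadForm_mul_eq_sum (B : Fin m → Fin m → ℝ) (y : Fin m → ℝ) (c : ℝ) :
    (∑ i, ∑ j, B i j * y i * y j) * c = ∑ i, ∑ j, B i j * (y i * y j * c) := by
  simp only [Finset.sum_mul, mul_assoc]

theorem integrable_quadForm_mul_radial {μ : Measure ((Fin m → ℝ) × ℝ)}
    (B : Fin m → Fin m → ℝ) (w : ℝ → ℝ → ℝ)
    (hw : ∀ i j, Integrable (fun x : (Fin m → ℝ) × ℝ => x.1 i * x.1 j * w (nsqT x.1) x.2) μ) :
    Integrable (fun x : (Fin m → ℝ) × ℝ =>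
      (∑ i, ∑ j, B i j * x.1 i * x.1 j) * w (nsqT x.1) x.2) μ := by
  simp only [quadForm_mul_eq_sum]
  exact integrable_finsetSum _ fun i _ => integrable_finsetSum _ fun j _ =>
    (hw i j).const_mul (B i j)

theorem integral_halfSpace_quadForm_mul_radial_eq_zero (B : Fin m → Fin m → ℝ)
    (hB : ∑ i, B i i = 0) (w : ℝ → ℝ → ℝ)
    (hw : ∀ i j, IntegrableOn (fun x : (Fin m → ℝ) × ℝ => x.1 i * x.1 j * w (nsqT x.1) x.2)
      {x | 0 < x.2}) :
    ∫ x in {x : (Fin m → ℝ) × ℝ | 0 < x.2},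
      (∑ i, ∑ j, B i j * x.1 i * x.1 j) * w (nsqT x.1) x.2 = 0 := by
  rcases isEmpty_or_nonempty (Fin m) with _ | ⟨⟨k⟩⟩
  · simp
  have hterm : ∀ i j, ∫ x in {x : (Fin m → ℝ) × ℝ | 0 < x.2},
      B i j * (x.1 i * x.1 j * w (nsqT x.1) x.2) =
        if i = j then B i i * ∫ x in {x : (Fin m → ℝ) × ℝ | 0 < x.2},
          x.1 k * x.1 k * w (nsqT x.1) x.2 else 0 := by
    intro i j
    rw [integral_const_mul]
    split_ifs with hij
    · rw [hij, integral_halfSpace_coord_mul_self_mul_radial j k]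
    · rw [integral_halfSpace_coord_mul_coord_mul_radial_of_ne hij, mul_zero]
  calc ∫ x in {x : (Fin m → ℝ) × ℝ | 0 < x.2},
        (∑ i, ∑ j, B i j * x.1 i * x.1 j) * w (nsqT x.1) x.2
      = ∫ x in {x : (Fin m → ℝ) × ℝ | 0 < x.2},
          ∑ i, ∑ j, B i j * (x.1 i * x.1 j * w (nsqT x.1) x.2) := by
        simp only [quadForm_mul_eq_sum]
    _ = ∑ i, ∑ j, ∫ x in {x : (Fin m → ℝ) × ℝ | 0 < x.2},
          B i j * (x.1 i * x.1 j * w (nsqT x.1) x.2) := by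
        rw [integral_finsetSum _ fun i _ => integrable_finsetSum _ fun j _ => (hw i j).const_mul _]
        exact Finset.sum_congr rfl fun i _ => integral_finsetSum _ fun j _ => (hw i j).const_mul _
    _ = (∑ i, B i i) * ∫ x in {x : (Fin m → ℝ) × ℝ | 0 < x.2},
          x.1 k * x.1 k * w (nsqT x.1) x.2 := by
        simp only [hterm, Finset.sum_ite_eq, Finset.mem_univ, if_true, Finset.sum_mul]
    _ = 0 := by rw [hB, zero_mul]

end Symmetry

-- `Q` of the header as a function of `s = |x̃|²` and `t = xₙ`.
def bubbleQuad (D s t : ℝ) : ℝ := s + (t + D) ^ 2 - 1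

section Integrability

variable {m : ℕ}

theorem nsqT_nonneg (y : Fin m → ℝ) : 0 ≤ nsqT y := Finset.sum_nonneg fun k _ => sq_nonneg (y k)

theorem abs_le_sqrt_nsqT (y : Fin m → ℝ) (i : Fin m) : |y i| ≤ √(nsqT y) :=
  Real.abs_le_sqrt (Finset.single_le_sum (fun k _ => sq_nonneg (y k)) (Finset.mem_univ i))

theorem abs_mul_le_nsqT (y : Fin m → ℝ) (i j : Fin m) : |y i * y j| ≤ nsqT y := by
  rw [abs_mul, ← Real.mul_self_sqrt (nsqT_nonneg y)]
  exact mul_le_mul (abs_le_sqrt_nsqT y i) (abs_le_sqrt_nsqT y j) (abs_nonneg _) (sqrt_nonneg _)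

theorem norm_sq_le_nsqT_add_sq (x : (Fin m → ℝ) × ℝ) : ‖x‖ ^ 2 ≤ nsqT x.1 + x.2 ^ 2 := by
  have hs := nsqT_nonneg x.1
  have hle : ‖x‖ ≤ √(nsqT x.1 + x.2 ^ 2) := by
    refine max_le ((pi_norm_le_iff_of_nonneg (sqrt_nonneg _)).2 fun k => ?_) ?_
    · rw [Real.norm_eq_abs]
      exact (abs_le_sqrt_nsqT x.1 k).trans
        (Real.sqrt_le_sqrt (le_add_of_nonneg_right (sq_nonneg _)))
    · rw [Real.norm_eq_abs]
      exact Real.abs_le_sqrt (by linarith)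
  calc ‖x‖ ^ 2 ≤ √(nsqT x.1 + x.2 ^ 2) ^ 2 := pow_le_pow_left₀ (norm_nonneg x) hle 2
    _ = nsqT x.1 + x.2 ^ 2 := Real.sq_sqrt (by positivity)

theorem bubbleQuad_pos {D s t : ℝ} (hD : 1 < D) (hs : 0 ≤ s) (ht : 0 ≤ t) :
    0 < bubbleQuad D s t := by
  unfold bubbleQuad; nlinarith

theorem one_add_norm_sq_le_bubbleQuad {D : ℝ} (hD : 1 < D) {x : (Fin m → ℝ) × ℝ} (hx : 0 ≤ x.2) :
    min 1 (D ^ 2 - 1) / 2 * (1 + ‖x‖) ^ 2 ≤ bubbleQuad D (nsqT x.1) x.2 := by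
  have hc1 : min 1 (D ^ 2 - 1) ≤ 1 := min_le_left _ _
  have hc2 : min 1 (D ^ 2 - 1) ≤ D ^ 2 - 1 := min_le_right _ _
  have hc0 : 0 < min 1 (D ^ 2 - 1) := lt_min one_pos (by nlinarith)
  have hnorm := norm_sq_le_nsqT_add_sq x
  have hs := nsqT_nonneg x.1
  have htwo : (1 + ‖x‖) ^ 2 ≤ 2 * (1 + ‖x‖ ^ 2) := by nlinarith [sq_nonneg (1 - ‖x‖)]
  unfold bubbleQuad
  nlinarith [mul_le_mul_of_nonneg_left htwo hc0.le, mul_le_mul_of_nonneg_left hnorm hc0.le]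

theorem integrableOn_halfSpace_of_abs_le_bubbleQuad_rpow {D p C : ℝ} (hD : 1 < D)
    (hp : (m + 1 : ℝ) < 2 * p) {f : (Fin m → ℝ) × ℝ → ℝ}
    (hf : AEStronglyMeasurable f (volume.restrict {x | 0 < x.2}))
    (hbound : ∀ x : (Fin m → ℝ) × ℝ, 0 < x.2 → |f x| ≤ C * bubbleQuad D (nsqT x.1) x.2 ^ (-p)) :
    IntegrableOn f {x | 0 < x.2} := by
  set c := min 1 (D ^ 2 - 1) / 2
  have hc : 0 < c := div_pos (lt_min one_pos (by nlinarith)) two_pos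
  have hdom : Integrable (fun x : (Fin m → ℝ) × ℝ => |C| * c ^ (-p) * (1 + ‖x‖) ^ (-(2 * p))) := by
    rw [Measure.volume_eq_prod]
    refine (integrable_one_add_norm ?_).const_mul _
    simpa using hp
  refine hdom.integrableOn.mono' hf ((ae_restrict_iff' (measurableSet_lt measurable_const
    measurable_snd)).2 (ae_of_all _ fun x hx => ?_))
  have hp0 : 0 < p := by linarith [(m.cast_nonneg : (0 : ℝ) ≤ m)]
  have hQpos := bubbleQuad_pos hD (nsqT_nonneg x.1) (le_of_lt hx)
  calc ‖f x‖ ≤ |C| * bubbleQuad D (nsqT x.1) x.2 ^ (-p) :=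
        (hbound x hx).trans (mul_le_mul_of_nonneg_right (le_abs_self C) (by positivity))
    _ ≤ |C| * (c * (1 + ‖x‖) ^ 2) ^ (-p) :=
        mul_le_mul_of_nonneg_left (Real.rpow_le_rpow_of_nonpos (by positivity)
          (one_add_norm_sq_le_bubbleQuad hD (le_of_lt hx)) (neg_nonpos.2 hp0.le)) (abs_nonneg C)
    _ = |C| * c ^ (-p) * (1 + ‖x‖) ^ (-(2 * p)) := by
        rw [Real.mul_rpow hc.le (by positivity), ← Real.rpow_natCast,
          ← Real.rpow_mul (by positivity)]
        push_cast
        ring_nf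

theorem continuous_nsqT_fst : Continuous fun x : (Fin m → ℝ) × ℝ => nsqT x.1 := by
  unfold nsqT; fun_prop

theorem integrableOn_halfSpace_coord_mul_coord_mul_weight {D r C : ℝ} (hD : 1 < D)
    (hr : (m + 1 : ℝ) < -4 * r) {F : ℝ → ℝ → ℝ} (hF : Measurable fun p : ℝ × ℝ => F p.1 p.2)
    (hFbound : ∀ s t, 0 ≤ s → 0 < t → |F s t| ≤ C * bubbleQuad D s t ^ r) (i j : Fin m) :
    IntegrableOn (fun x : (Fin m → ℝ) × ℝ => x.1 i * x.1 j *
      (x.2 ^ 2 * bubbleQuad D (nsqT x.1) x.2 ^ (r - 2) * F (nsqT x.1) x.2)) {x | 0 < x.2} := by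
  refine integrableOn_halfSpace_of_abs_le_bubbleQuad_rpow (p := -(2 * r)) (C := C) hD
    (by linarith) ?_ fun x hx => ?_
  · have hs := continuous_nsqT_fst (m := m)
    have hFx : Measurable fun x : (Fin m → ℝ) × ℝ => F (nsqT x.1) x.2 :=
      hF.comp (hs.measurable.prodMk measurable_snd)
    refine Measurable.aestronglyMeasurable ?_
    unfold bubbleQuad
    fun_prop
  set Q := bubbleQuad D (nsqT x.1) x.2
  have hQ : 0 < Q := bubbleQuad_pos hD (nsqT_nonneg x.1) hx.le
  have htQ : x.2 ^ 2 ≤ Q := by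
    have := nsqT_nonneg x.1
    simp only [Q, bubbleQuad]; nlinarith
  have hsQ : nsqT x.1 ≤ Q := by
    simp only [Q, bubbleQuad]; nlinarith
  have hpow : Q * (Q * Q ^ (r - 2)) * Q ^ r = Q ^ (-(-(2 * r))) := by
    rw [neg_neg, Real.rpow_sub hQ, Real.rpow_two, two_mul, Real.rpow_add hQ]
    field_simp
  calc |x.1 i * x.1 j * (x.2 ^ 2 * Q ^ (r - 2) * F (nsqT x.1) x.2)|
      = |x.1 i * x.1 j| * (x.2 ^ 2 * Q ^ (r - 2)) * |F (nsqT x.1) x.2| := by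
        rw [abs_mul, abs_mul (_ * _) (F _ _),
          abs_of_nonneg (by positivity : 0 ≤ x.2 ^ 2 * Q ^ (r - 2))]
        ring
    _ ≤ Q * (Q * Q ^ (r - 2)) * (C * Q ^ r) := by
        gcongr
        · exact (abs_mul_le_nsqT x.1 i j).trans hsQ
        · exact hFbound _ _ (nsqT_nonneg x.1) hx
    _ = C * Q ^ (-(-(2 * r))) := by rw [← hpow]; ring

theorem integral_halfSpace_quadForm_mul_weight_eq_zero {D r C : ℝ} (hD : 1 < D)
    (hr : (m + 1 : ℝ) < -4 * r) (B : Fin m → Fin m → ℝ) (hB : ∑ i, B i i = 0)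
    {F : ℝ → ℝ → ℝ} (hF : Measurable fun p : ℝ × ℝ => F p.1 p.2)
    (hFbound : ∀ s t, 0 ≤ s → 0 < t → |F s t| ≤ C * bubbleQuad D s t ^ r) :
    IntegrableOn (fun x : (Fin m → ℝ) × ℝ => (∑ i, ∑ j, B i j * x.1 i * x.1 j) *
        (x.2 ^ 2 * bubbleQuad D (nsqT x.1) x.2 ^ (r - 2) * F (nsqT x.1) x.2)) {x | 0 < x.2} ∧
      ∫ x in {x : (Fin m → ℝ) × ℝ | 0 < x.2}, (∑ i, ∑ j, B i j * x.1 i * x.1 j) *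
        (x.2 ^ 2 * bubbleQuad D (nsqT x.1) x.2 ^ (r - 2) * F (nsqT x.1) x.2) = 0 :=
  have hterm := integrableOn_halfSpace_coord_mul_coord_mul_weight hD hr hF hFbound
  ⟨integrable_quadForm_mul_radial B (fun s t => t ^ 2 * bubbleQuad D s t ^ (r - 2) * F s t) hterm,
    integral_halfSpace_quadForm_mul_radial_eq_zero B hB
      (fun s t => t ^ 2 * bubbleQuad D s t ^ (r - 2) * F s t) hterm⟩

theorem abs_mul_bubbleQuad_rpow_sub_one_le {D s t : ℝ} (hD : 1 < D) (hs : 0 ≤ s) (ht : 0 < t)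
    (c r : ℝ) :
    |c * bubbleQuad D s t ^ (r - 1) * (s + t * (t + D))| ≤ |c| * bubbleQuad D s t ^ r := by
  have hQ := bubbleQuad_pos hD hs ht.le
  have hlin : 0 ≤ s + t * (t + D) := by positivity
  have hle : s + t * (t + D) ≤ bubbleQuad D s t := by unfold bubbleQuad; nlinarith
  rw [abs_mul, abs_mul, abs_of_pos (Real.rpow_pos_of_pos hQ _), abs_of_nonneg hlin, mul_assoc,
    Real.rpow_sub_one hQ.ne']
  gcongr
  rw [div_mul_eq_mul_div, div_le_iff₀ hQ]
  exact mul_le_mul_of_nonneg_left hle (Real.rpow_pos_of_pos hQ _).le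

end Integrability

theorem hasFDerivAt_bubbleQuad {n : ℕ} (D : ℝ) (x : Pt n) :
    HasFDerivAt (fun x : Pt n => bubbleQuad D (nsqT x.1) x.2)
      (∑ k, (2 * x.1 k) • ((ContinuousLinearMap.proj k).comp (ContinuousLinearMap.fst ℝ _ ℝ)) +
        (2 * (x.2 + D)) • ContinuousLinearMap.snd ℝ _ ℝ) x := by
  have hT : HasFDerivAt (fun x : Pt n => nsqT x.1)
      (∑ k, (2 * x.1 k) • ((ContinuousLinearMap.proj k).comp (ContinuousLinearMap.fst ℝ _ ℝ))) x :=
    HasFDerivAt.fun_sum fun k _ => by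
      simpa [mul_comm] using
        (((ContinuousLinearMap.proj k).comp
          (ContinuousLinearMap.fst ℝ (Fin (n - 1) → ℝ) ℝ)).hasFDerivAt (x := x)).pow 2
  have hN : HasFDerivAt (fun x : Pt n => (x.2 + D) ^ 2)
      ((2 * (x.2 + D)) • ContinuousLinearMap.snd ℝ _ ℝ) x := by
    simpa [mul_comm, add_mul] using
      (((ContinuousLinearMap.snd ℝ (Fin (n - 1) → ℝ) ℝ).hasFDerivAt (x := x)).add_const D).pow 2
  exact (hT.add hN).sub_const 1

theorem fderiv_bubbleQuad_apply {n : ℕ} (D : ℝ) (x v : Pt n) :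
    fderiv ℝ (fun x : Pt n => bubbleQuad D (nsqT x.1) x.2) x v =
      2 * ∑ k, x.1 k * v.1 k + 2 * (x.2 + D) * v.2 := by
  simp [(hasFDerivAt_bubbleQuad D x).fderiv, Finset.mul_sum, mul_assoc]

def bubbleProfile (n : ℕ) (D C r : ℝ) (x : Pt n) : ℝ := C * bubbleQuad D (nsqT x.1) x.2 ^ r

def curvatureHessian {n : ℕ} (c : ℝ) (A : Fin (n - 1) → Fin (n - 1) → Fin (n - 1) → Fin (n - 1) → ℝ)
    (B : Fin (n - 1) → Fin (n - 1) → ℝ) (f : Pt n → ℝ) (x : Pt n) : ℝ :=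
  c * ∑ i, ∑ j, ((1 / 3) * (∑ k, ∑ l, A i k j l * x.1 k * x.1 l) + B i j * x.2 ^ 2) *
    pdT j (pdT i f) x

section Bubble

variable {n : ℕ} {D C r c : ℝ} {A : Fin (n - 1) → Fin (n - 1) → Fin (n - 1) → Fin (n - 1) → ℝ}
  {B : Fin (n - 1) → Fin (n - 1) → ℝ}

theorem fderiv_bubbleProfile_apply {x : Pt n} (hx : bubbleQuad D (nsqT x.1) x.2 ≠ 0) (v : Pt n) :
    fderiv ℝ (bubbleProfile n D C r) x v = 2 * C * r * bubbleQuad D (nsqT x.1) x.2 ^ (r - 1) *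
      (∑ k, x.1 k * v.1 k + (x.2 + D) * v.2) := by
  have h := ((hasFDerivAt_bubbleQuad D x).differentiableAt.hasFDerivAt.rpow_const (p := r)
    (Or.inl hx)).const_mul C
  rw [HasFDerivAt.fderiv (f := bubbleProfile n D C r) h]
  simp only [smul_apply, smul_eq_mul, fderiv_bubbleQuad_apply]
  ring

theorem pdT_bubbleProfile {x : Pt n} (hx : bubbleQuad D (nsqT x.1) x.2 ≠ 0) (i : Fin (n - 1)) :
    pdT i (bubbleProfile n D C r) x =
      2 * C * r * bubbleQuad D (nsqT x.1) x.2 ^ (r - 1) * x.1 i := by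
  simp [pdT, fderiv_bubbleProfile_apply hx, Pi.single_apply]

theorem pdN_bubbleProfile {x : Pt n} (hx : bubbleQuad D (nsqT x.1) x.2 ≠ 0) :
    pdN (bubbleProfile n D C r) x =
      2 * C * r * bubbleQuad D (nsqT x.1) x.2 ^ (r - 1) * (x.2 + D) := by
  simp [pdN, fderiv_bubbleProfile_apply hx]

theorem euler_bubbleProfile {x : Pt n} (hx : bubbleQuad D (nsqT x.1) x.2 ≠ 0) :
    (∑ i, x.1 i * pdT i (bubbleProfile n D C r) x) + x.2 * pdN (bubbleProfile n D C r) x =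
      2 * C * r * bubbleQuad D (nsqT x.1) x.2 ^ (r - 1) * (nsqT x.1 + x.2 * (x.2 + D)) := by
  simp only [pdT_bubbleProfile hx, pdN_bubbleProfile hx]
  set c := 2 * C * r * bubbleQuad D (nsqT x.1) x.2 ^ (r - 1)
  have hsum : ∑ i, x.1 i * (c * x.1 i) = c * nsqT x.1 := by
    rw [nsqT, Finset.mul_sum]
    exact Finset.sum_congr rfl fun k _ => by ring
  rw [hsum]
  ring

theorem pdT_pdT_bubbleProfile {x : Pt n} (hx : 0 < bubbleQuad D (nsqT x.1) x.2)
    (i j : Fin (n - 1)) :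
    pdT j (pdT i (bubbleProfile n D C r)) x =
      (if i = j then 2 * C * r * bubbleQuad D (nsqT x.1) x.2 ^ (r - 1) else 0) +
        4 * C * r * (r - 1) * bubbleQuad D (nsqT x.1) x.2 ^ (r - 2) * x.1 i * x.1 j := by
  have hQ := (hasFDerivAt_bubbleQuad D x).differentiableAt.hasFDerivAt
  -- `Q > 0` near `x`, where the closed formula for `∂ᵢ U` holds
  have hnear : pdT i (bubbleProfile n D C r) =ᶠ[nhds x]
      fun y => 2 * C * r * (bubbleQuad D (nsqT y.1) y.2 ^ (r - 1) * y.1 i) := by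
    filter_upwards [hQ.continuousAt.eventually (Ioi_mem_nhds hx)] with y hy
    rw [pdT_bubbleProfile (ne_of_gt hy)]
    ring
  have hcoord : HasFDerivAt (fun y : Pt n => y.1 i)
      ((ContinuousLinearMap.proj i).comp (ContinuousLinearMap.fst ℝ (Fin (n - 1) → ℝ) ℝ)) x :=
    ((ContinuousLinearMap.proj i).comp
      (ContinuousLinearMap.fst ℝ (Fin (n - 1) → ℝ) ℝ)).hasFDerivAt
  have h := ((hQ.rpow_const (p := r - 1) (Or.inl hx.ne')).fun_mul hcoord).const_mul (2 * C * r)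
  rw [pdT, hnear.fderiv_eq, h.fderiv]
  simp only [smul_apply, add_apply, smul_eq_mul, fderiv_bubbleQuad_apply,
    ContinuousLinearMap.coe_comp, Function.comp_apply, ContinuousLinearMap.coe_fst',
    ContinuousLinearMap.proj_apply, Pi.single_apply, mul_ite, mul_one, mul_zero,
    Finset.sum_ite_eq', Finset.mem_univ, if_true, show r - 1 - 1 = r - 2 by ring]
  split_ifs <;> ring

theorem curvatureHessian_bubbleProfile (hA : ∀ i k j l, A i k j l = -A k i j l)
    (hRic : ∀ k l, ∑ i, A i k i l = 0) (hB : ∑ i, B i i = 0) {x : Pt n}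
    (hx : 0 < bubbleQuad D (nsqT x.1) x.2) :
    curvatureHessian c A B (bubbleProfile n D C r) x = (∑ i, ∑ j, B i j * x.1 i * x.1 j) *
      (x.2 ^ 2 * bubbleQuad D (nsqT x.1) x.2 ^ (r - 2) * (4 * c * C * r * (r - 1))) := by
  unfold curvatureHessian
  simp only [pdT_pdT_bubbleProfile hx]
  rw [sum_curvatureCoeff_mul_hessian A x.1 hA hRic B hB]
  ring

theorem integral_halfSpace_curvatureHessian_bubbleProfile_mul_eq_zero (hD : 1 < D)
    (hr : ((n - 1 : ℕ) + 1 : ℝ) < -4 * r) (hA : ∀ i k j l, A i k j l = -A k i j l)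
    (hRic : ∀ k l, ∑ i, A i k i l = 0) (hB : ∑ i, B i i = 0) {G : Pt n → ℝ} {F : ℝ → ℝ → ℝ}
    (hF : Measurable fun p : ℝ × ℝ => F p.1 p.2) {M : ℝ}
    (hFbound : ∀ s t, 0 ≤ s → 0 < t → |F s t| ≤ M * bubbleQuad D s t ^ r)
    (hG : ∀ x : Pt n, 0 < x.2 → G x = F (nsqT x.1) x.2) :
    IntegrableOn (fun x => curvatureHessian c A B (bubbleProfile n D C r) x * G x)
        {x : Pt n | 0 < x.2} ∧
      ∫ x in {x : Pt n | 0 < x.2}, curvatureHessian c A B (bubbleProfile n D C r) x * G x = 0 := by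
  set κ := 4 * c * C * r * (r - 1)
  have hEq : Set.EqOn (fun x => curvatureHessian c A B (bubbleProfile n D C r) x * G x)
      (fun x : Pt n => (∑ i, ∑ j, B i j * x.1 i * x.1 j) *
        (x.2 ^ 2 * bubbleQuad D (nsqT x.1) x.2 ^ (r - 2) * (κ * F (nsqT x.1) x.2)))
      {x | 0 < x.2} := fun x hx => by
    simp only [curvatureHessian_bubbleProfile hA hRic hB
      (bubbleQuad_pos hD (nsqT_nonneg x.1) (le_of_lt hx)), hG x hx]
    ring
  have hκF : ∀ s t, 0 ≤ s → 0 < t → |κ * F s t| ≤ |κ| * M * bubbleQuad D s t ^ r :=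
    fun s t hs ht => by
      rw [abs_mul, mul_assoc]
      exact mul_le_mul_of_nonneg_left (hFbound s t hs ht) (abs_nonneg κ)
  obtain ⟨hint, hzero⟩ := integral_halfSpace_quadForm_mul_weight_eq_zero hD hr B hB
    (hF.const_mul κ) hκF
  have hH : MeasurableSet {x : Pt n | 0 < x.2} := measurableSet_lt measurable_const measurable_snd
  exact ⟨hint.congr_fun hEq.symm hH, (setIntegral_congr_fun hH hEq).trans hzero⟩

end Bubble

theorem stmt_8_general (n : ℕ) (hn : 5 ≤ n) (K D : ℝ) (hD : 1 < D)
    (cn : ℝ)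
    (A : Fin (n - 1) → Fin (n - 1) → Fin (n - 1) → Fin (n - 1) → ℝ)
    (B : Fin (n - 1) → Fin (n - 1) → ℝ)
    (hA1 : ∀ i k j l, A i k j l = -A k i j l)
    (hA4 : ∀ k l, ∑ i, A i k i l = 0)
    (hB2 : ∑ i, B i i = 0)
    (U : Pt n → ℝ) (hU : U = bubble n K D)
    (E : Pt n → ℝ)
    (hE : E = fun x : Pt n =>
      cn * ∑ i, ∑ j,
        ((1 / 3) * (∑ k, ∑ l, A i k j l * x.1 k * x.1 l) + B i j * x.2 ^ 2) *
          pdT j (pdT i U) x)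
    (xGradU : Pt n → ℝ)
    (hxGradU : xGradU = fun x : Pt n =>
      (∑ i, x.1 i * pdT i U x) + x.2 * pdN U x)
    (jn : Pt n → ℝ)
    (hjn : jn = fun x : Pt n => ((2 - (n : ℝ)) / 2) * U x - xGradU x) :
    IntegrableOn (fun x : Pt n => E x * xGradU x) {x : Pt n | 0 < x.2} ∧
    (∫ x in {x : Pt n | 0 < x.2}, E x * xGradU x = 0) ∧
    ∫ x in {x : Pt n | 0 < x.2}, E x * jn x = 0 := by
  set C := (4 * (n : ℝ) * ((n : ℝ) - 1)) ^ (((n : ℝ) - 2) / 4) * |K| ^ (-(((n : ℝ) - 2) / 4))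
  set r : ℝ := -(((n : ℝ) - 2) / 2)
  have hUC : U = bubbleProfile n D C r := hU
  have hEC : E = curvatureHessian cn A B (bubbleProfile n D C r) := by rw [hE, hUC]; rfl
  subst hUC hEC hxGradU hjn
  have hr : ((n - 1 : ℕ) + 1 : ℝ) < -4 * r := by
    have : (5 : ℝ) ≤ n := by exact_mod_cast hn
    rw [Nat.cast_sub (by omega), Nat.cast_one]
    simp only [r]
    linarith
  obtain ⟨hintG, hzeroG⟩ := integral_halfSpace_curvatureHessian_bubbleProfile_mul_eq_zero hD hr
    hA1 hA4 hB2 (F := fun s t => 2 * C * r * bubbleQuad D s t ^ (r - 1) * (s + t * (t + D)))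
    (by unfold bubbleQuad; fun_prop)
    (fun s t hs ht => abs_mul_bubbleQuad_rpow_sub_one_le hD hs ht _ r)
    (fun x hx => euler_bubbleProfile (bubbleQuad_pos hD (nsqT_nonneg x.1) hx.le).ne')
  obtain ⟨hintU, hzeroU⟩ := integral_halfSpace_curvatureHessian_bubbleProfile_mul_eq_zero hD hr
    hA1 hA4 hB2 (G := bubbleProfile n D C r) (F := fun s t => C * bubbleQuad D s t ^ r)
    (by unfold bubbleQuad; fun_prop)
    (fun s t hs ht => by
      rw [abs_mul, abs_of_pos (Real.rpow_pos_of_pos (bubbleQuad_pos hD hs ht.le) r)])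
    (fun x _ => rfl)
  refine ⟨hintG, hzeroG, ?_⟩
  simp only [mul_sub, mul_left_comm _ ((2 - (n : ℝ)) / 2)]
  rw [integral_sub (hintU.const_mul _) hintG, integral_const_mul, hzeroU, hzeroG]
  ring

/-- under the curvature symmetry hypotheses on `A` and `B`,
`∫_{ℝⁿ₊} E (x·∇U) dx = 0`, and consequently `∫_{ℝⁿ₊} E 𝔧ₙ dx = 0` for
`𝔧ₙ = ((2-n)/2) U - x·∇U`. -/
theorem stmt_8 (n : ℕ) (hn : 5 ≤ n) (K D : ℝ) (hK : K < 0) (hD : 1 < D)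
    (cn : ℝ) (hcn : cn = 4 * ((n : ℝ) - 1) / ((n : ℝ) - 2))
    (A : Fin (n - 1) → Fin (n - 1) → Fin (n - 1) → Fin (n - 1) → ℝ)
    (B : Fin (n - 1) → Fin (n - 1) → ℝ)
    (hA1 : ∀ i k j l, A i k j l = -A k i j l)
    (hA2 : ∀ i k j l, A i k j l = -A i k l j)
    (hA3 : ∀ i k j l, A i k j l = A j l i k)
    (hA4 : ∀ k l, ∑ i, A i k i l = 0)
    (hB1 : ∀ i j, B i j = B j i)
    (hB2 : ∑ i, B i i = 0)
    (U : Pt n → ℝ) (hU : U = bubble n K D)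
    (E : Pt n → ℝ)
    (hE : E = fun x : Pt n =>
      cn * ∑ i, ∑ j,
        ((1 / 3) * (∑ k, ∑ l, A i k j l * x.1 k * x.1 l) + B i j * x.2 ^ 2) *
          pdT j (pdT i U) x)
    (xGradU : Pt n → ℝ)
    (hxGradU : xGradU = fun x : Pt n =>
      (∑ i, x.1 i * pdT i U x) + x.2 * pdN U x)
    (jn : Pt n → ℝ)
    (hjn : jn = fun x : Pt n => ((2 - (n : ℝ)) / 2) * U x - xGradU x) :
    IntegrableOn (fun x : Pt n => E x * xGradU x) {x : Pt n | 0 < x.2} ∧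
    (∫ x in {x : Pt n | 0 < x.2}, E x * xGradU x = 0) ∧
    ∫ x in {x : Pt n | 0 < x.2}, E x * jn x = 0 :=
  stmt_8_general n hn K D hD cn A B hA1 hA4 hB2 U hU E hE xGradU hxGradU jn hjn
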